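/- (Remark: monotonicity in the E-argument.) Let F be a finite set, G ⊆ F nonempty with M = |G|, and 𝒬 a finite collection of subsets of F such that every Q ∈ 𝒬 contains exactly one element of G and every element of G lies in some Q ∈ 𝒬; let Pr and 𝒟 be the associated probability measure and entropic weight. If S, S' ⊆ F satisfy E(S) ⊆ E(S'), then 𝒟(S) ≤ 𝒟(S'). -/

import Mathlib

open Finset

noncomputable section

/-- `Qset 𝒬 φ` is the set `𝒬_φ = {Q ∈ 𝒬 : φ ∈ Q}` of proofs of the goal `φ`. -/
def Qset {α : Type*} [DecidableEq α] (𝒬 : Finset (Finset α)) (φ : α) :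
    Finset (Finset α) :=
  𝒬.filter fun Q => φ ∈ Q

/-- `ESet 𝒬 S = E(S) = {Q ∈ 𝒬 : S ⊆ Q}`. -/
def ESet {α : Type*} [DecidableEq α] (𝒬 : Finset (Finset α)) (S : Finset α) :
    Finset (Finset α) :=
  𝒬.filter fun Q => S ⊆ Q

/-- The probability of a single proof `Q`: `Pr(Q) = 1/(M·|𝒬_φ|)` where `φ` is the
unique element of `Q ∩ G` (the goal of `Q`), written as a sum over `Q ∩ G`. -/
def prOne {α : Type*} [DecidableEq α] (G : Finset α) (𝒬 : Finset (Finset α))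
    (Q : Finset α) : ℝ :=
  ∑ φ ∈ Q ∩ G, ((G.card : ℝ) * ((Qset 𝒬 φ).card : ℝ))⁻¹

/-- The probability measure of a set of proofs, extended additively. -/
def PrM {α : Type*} [DecidableEq α] (G : Finset α) (𝒬 : Finset (Finset α))
    (A : Finset (Finset α)) : ℝ :=
  ∑ Q ∈ A, prOne G 𝒬 Q

/-- The entropic weight
`𝒟(S) = −Σ_{φ∈G} Pr(E(S)∩𝒬_φ)·log₂ Pr(E(S)∩𝒬_φ) + Pr(E(S))·log₂ Pr(E(S))`
(in Lean, `Real.logb 2 0 = 0`, so the convention `0·log₂ 0 = 0` is automatic). -/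
def entWeight {α : Type*} [DecidableEq α] (G : Finset α) (𝒬 : Finset (Finset α))
    (S : Finset α) : ℝ :=
  -∑ φ ∈ G, PrM G 𝒬 (ESet 𝒬 S ∩ Qset 𝒬 φ) *
      Real.logb 2 (PrM G 𝒬 (ESet 𝒬 S ∩ Qset 𝒬 φ)) +
    PrM G 𝒬 (ESet 𝒬 S) * Real.logb 2 (PrM G 𝒬 (ESet 𝒬 S))

/-!
Writing `x_φ = Pr(E(S) ∩ 𝒬_φ)`, the condition `|Q ∩ G| = 1` makes `Pr(E(S)) = Σ_φ x_φ`, so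
`𝒟(S) = f (Σ_φ x_φ) - Σ_φ f x_φ` with `f u = u log₂ u`. Since `f` is convex, its increments
`f (u + c) - f u` grow with `u`; raising one coordinate `x_φ` at a time therefore raises `𝒟`.
Finally `E(S) ⊆ E(S')` gives `x_φ ≤ x'_φ` coordinatewise.
-/

theorem ConvexOn.map_add_sub_map_le {D : Set ℝ} {f : ℝ → ℝ} (hf : ConvexOn ℝ D f)
    {c s t : ℝ} (hs : s ∈ D) (htc : t + c ∈ D) (hc : 0 ≤ c) (hst : s ≤ t) :
    f (s + c) - f s ≤ f (t + c) - f t := by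
  rcases (add_nonneg (sub_nonneg.2 hst) hc).eq_or_lt with hd | hd
  · obtain ⟨rfl, rfl⟩ : t = s ∧ c = 0 := by constructor <;> linarith
    rfl
  -- `t` and `s + c` are the two convex combinations of `s` and `t + c` with swapped weights.
  set d := t - s + c
  have hw : c / d + (t - s) / d = 1 := by field_simp; ring
  have h₁ := hf.2 hs htc (div_nonneg hc hd.le) (div_nonneg (sub_nonneg.2 hst) hd.le) hw
  have h₂ := hf.2 hs htc (div_nonneg (sub_nonneg.2 hst) hd.le) (div_nonneg hc hd.le)
    (by linarith)
  simp only [smul_eq_mul] at h₁ h₂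
  have e₁ : c / d * s + (t - s) / d * (t + c) = t := by field_simp; ring
  have e₂ : (t - s) / d * s + c / d * (t + c) = s + c := by field_simp; ring
  rw [e₁] at h₁
  rw [e₂] at h₂
  linear_combination h₁ + h₂ + (f s + f (t + c)) * hw

theorem ConvexOn.map_add_sum_sub_sum_map_le {ι : Type*} {f : ℝ → ℝ}
    (hf : ConvexOn ℝ (Set.Ici 0) f) (s : Finset ι) {c : ℝ} (hc : 0 ≤ c) {x y : ι → ℝ}
    (hx : ∀ i ∈ s, 0 ≤ x i) (hxy : ∀ i ∈ s, x i ≤ y i) :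
    f (c + ∑ i ∈ s, x i) - ∑ i ∈ s, f (x i) ≤ f (c + ∑ i ∈ s, y i) - ∑ i ∈ s, f (y i) := by
  induction s using Finset.cons_induction generalizing c with
  | empty => simp
  | cons a s ha ih =>
    simp only [forall_mem_cons] at hx hxy
    have hy : 0 ≤ ∑ i ∈ s, y i := sum_nonneg fun i hi => (hx.2 i hi).trans (hxy.2 i hi)
    have hrest := ih (add_nonneg hc hx.1) hx.2 hxy.2
    have hfirst : f (c + x a + ∑ i ∈ s, y i) - f (x a) ≤ f (c + y a + ∑ i ∈ s, y i) - f (y a) := by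
      convert hf.map_add_sub_map_le (c := c + ∑ i ∈ s, y i) hx.1
        (by simp only [Set.mem_Ici]; linarith) (by linarith) hxy.1 using 3 <;> ring
    simp only [sum_cons, ← add_assoc]
    linarith

theorem convexOn_mul_logb_two : ConvexOn ℝ (Set.Ici 0) fun u : ℝ => u * Real.logb 2 u := by
  have h : (fun u : ℝ => u * Real.logb 2 u) = fun u => (Real.log 2)⁻¹ • (u * Real.log u) := by
    ext u
    simp only [Real.logb, smul_eq_mul]
    ring
  rw [h]
  exact Real.convexOn_mul_log.smul (inv_nonneg.2 (Real.log_nonneg one_le_two))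

section

variable {α : Type*} [DecidableEq α] (G : Finset α) (𝒬 : Finset (Finset α))

theorem PrM_nonneg (A : Finset (Finset α)) : 0 ≤ PrM G 𝒬 A :=
  sum_nonneg fun _ _ => sum_nonneg fun _ _ => by positivity

theorem PrM_mono {A B : Finset (Finset α)} (h : A ⊆ B) : PrM G 𝒬 A ≤ PrM G 𝒬 B :=
  sum_le_sum_of_subset_of_nonneg h fun _ _ _ => sum_nonneg fun _ _ => by positivity

theorem PrM_eq_sum_inter_Qset (hone : ∀ Q ∈ 𝒬, (Q ∩ G).card = 1) {A : Finset (Finset α)}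
    (hA : A ⊆ 𝒬) : PrM G 𝒬 A = ∑ φ ∈ G, PrM G 𝒬 (A ∩ Qset 𝒬 φ) := by
  have hfilter : ∀ φ, A ∩ Qset 𝒬 φ = A.filter fun Q => φ ∈ Q := fun φ => by
    ext Q
    simp only [Qset, mem_inter, mem_filter]
    exact ⟨fun h => ⟨h.1, h.2.2⟩, fun h => ⟨h.1, hA h.1, h.2⟩⟩
  simp only [PrM, hfilter, sum_filter]
  rw [sum_comm]
  refine sum_congr rfl fun Q hQ => ?_
  rw [sum_ite_mem, sum_const, inter_comm, hone Q (hA hQ), one_smul]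

end

theorem stmt11_general {α : Type*} [DecidableEq α] (G : Finset α) (𝒬 : Finset (Finset α))
    (hone : ∀ Q ∈ 𝒬, (Q ∩ G).card = 1)
    (S S' : Finset α)
    (hE : ESet 𝒬 S ⊆ ESet 𝒬 S') :
    entWeight G 𝒬 S ≤ entWeight G 𝒬 S' := by
  have key := convexOn_mul_logb_two.map_add_sum_sub_sum_map_le G le_rfl
    (x := fun φ => PrM G 𝒬 (ESet 𝒬 S ∩ Qset 𝒬 φ))
    (y := fun φ => PrM G 𝒬 (ESet 𝒬 S' ∩ Qset 𝒬 φ))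
    (fun _ _ => PrM_nonneg G 𝒬 _) (fun _ _ => PrM_mono G 𝒬 (inter_subset_inter_right hE))
  simp only [zero_add] at key
  unfold entWeight
  rw [PrM_eq_sum_inter_Qset G 𝒬 hone (A := ESet 𝒬 S) (filter_subset _ _),
    PrM_eq_sum_inter_Qset G 𝒬 hone (A := ESet 𝒬 S') (filter_subset _ _)]
  linarith

/-- Remark: monotonicity in the `E`-argument.  If `E(S) ⊆ E(S')` then
`𝒟(S) ≤ 𝒟(S')`. -/
theorem stmt11 {α : Type*} [DecidableEq α] (F G : Finset α) (𝒬 : Finset (Finset α))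
    (hGF : G ⊆ F) (hGne : G.Nonempty) (h𝒬F : ∀ Q ∈ 𝒬, Q ⊆ F)
    (hone : ∀ Q ∈ 𝒬, (Q ∩ G).card = 1)
    (hcover : ∀ φ ∈ G, ∃ Q ∈ 𝒬, φ ∈ Q)
    (S S' : Finset α) (hSF : S ⊆ F) (hS'F : S' ⊆ F)
    (hE : ESet 𝒬 S ⊆ ESet 𝒬 S') :
    entWeight G 𝒬 S ≤ entWeight G 𝒬 S' :=
  stmt11_general G 𝒬 hone S S' hE
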